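/- Let X ~ uniform on ball B(c, r) and Y ~ uniform on ball B(c + t·v, r') in R^d, independent, where v is a unit vector and t ≥ 0. Then the function t ↦ E[‖X - Y‖] is monotone nondecreasing in t. -/
import Mathlib

open MeasureTheory Metric

namespace ExpDistAux

variable {d : ℕ}

lemma integ (w a b : EuclideanSpace ℝ (Fin d)) (r r' : ℝ) :
    IntegrableOn (fun p : EuclideanSpace ℝ (Fin d) × EuclideanSpace ℝ (Fin d) =>
      ‖p.1 - p.2 - w‖) (closedBall a r ×ˢ closedBall b r') volume :=
  (((continuous_fst.sub continuous_snd).sub continuous_const).norm).continuousOn.integrableOn_compact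
    ((isCompact_closedBall _ _).prod (isCompact_closedBall _ _))

lemma even_P (v : EuclideanSpace ℝ (Fin d)) (r r' t : ℝ) :
    (∫ p in closedBall (0 : EuclideanSpace ℝ (Fin d)) r ×ˢ closedBall (0 : EuclideanSpace ℝ (Fin d)) r',
        ‖p.1 - p.2 + t • v‖ ∂volume)
      = ∫ p in closedBall (0 : EuclideanSpace ℝ (Fin d)) r ×ˢ closedBall (0 : EuclideanSpace ℝ (Fin d)) r',
        ‖p.1 - p.2 - t • v‖ ∂volume := by
  have hmp : MeasurePreserving
      (Neg.neg : (EuclideanSpace ℝ (Fin d) × EuclideanSpace ℝ (Fin d)) → _) volume volume := by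
    have h := (Measure.measurePreserving_neg (volume : Measure (EuclideanSpace ℝ (Fin d)))).prod
      (Measure.measurePreserving_neg (volume : Measure (EuclideanSpace ℝ (Fin d))))
    exact h
  have hemb : MeasurableEmbedding
      (Neg.neg : (EuclideanSpace ℝ (Fin d) × EuclideanSpace ℝ (Fin d)) → _) :=
    (Homeomorph.neg (EuclideanSpace ℝ (Fin d) × EuclideanSpace ℝ (Fin d))).measurableEmbedding
  have h := hmp.setIntegral_preimage_emb hemb
    (fun p : EuclideanSpace ℝ (Fin d) × EuclideanSpace ℝ (Fin d) => ‖p.1 - p.2 - t • v‖)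
    (closedBall 0 r ×ˢ closedBall 0 r')
  have hpre : (Neg.neg : (EuclideanSpace ℝ (Fin d) × EuclideanSpace ℝ (Fin d)) → _) ⁻¹'
      (closedBall 0 r ×ˢ closedBall 0 r') = closedBall 0 r ×ˢ closedBall 0 r' := by
    ext p
    simp [Set.mem_prod, mem_closedBall, dist_zero_right]
  rw [hpre] at h
  refine Eq.trans ?_ h
  refine integral_congr_ae (Filter.Eventually.of_forall fun p => ?_)
  have : (-p).1 - (-p).2 - t • v = -(p.1 - p.2 + t • v) := by
    simp only [Prod.fst_neg, Prod.snd_neg]; abel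
  simp only [this, norm_neg]

lemma translate (c v : EuclideanSpace ℝ (Fin d)) (r r' t : ℝ) :
    (∫ z in closedBall c r ×ˢ closedBall (c + t • v) r', ‖z.1 - z.2‖ ∂volume)
      = ∫ p in closedBall (0 : EuclideanSpace ℝ (Fin d)) r ×ˢ closedBall (0 : EuclideanSpace ℝ (Fin d)) r',
        ‖p.1 - p.2 - t • v‖ ∂volume := by
  set a : EuclideanSpace ℝ (Fin d) × EuclideanSpace ℝ (Fin d) := (c, c + t • v) with ha
  have hmp : MeasurePreserving
      (fun p : EuclideanSpace ℝ (Fin d) × EuclideanSpace ℝ (Fin d) => a + p) volume volume := by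
    have h := (measurePreserving_add_left (volume : Measure (EuclideanSpace ℝ (Fin d))) c).prod
      (measurePreserving_add_left (volume : Measure (EuclideanSpace ℝ (Fin d))) (c + t • v))
    exact h
  have hemb : MeasurableEmbedding
      (fun p : EuclideanSpace ℝ (Fin d) × EuclideanSpace ℝ (Fin d) => a + p) :=
    (Homeomorph.addLeft a).measurableEmbedding
  have h := hmp.setIntegral_preimage_emb hemb
    (fun z : EuclideanSpace ℝ (Fin d) × EuclideanSpace ℝ (Fin d) => ‖z.1 - z.2‖)
    (closedBall c r ×ˢ closedBall (c + t • v) r')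
  have hpre : (fun p : EuclideanSpace ℝ (Fin d) × EuclideanSpace ℝ (Fin d) => a + p) ⁻¹'
      (closedBall c r ×ˢ closedBall (c + t • v) r')
      = closedBall (0 : EuclideanSpace ℝ (Fin d)) r ×ˢ closedBall (0 : EuclideanSpace ℝ (Fin d)) r' := by
    ext p
    simp [ha, Set.mem_prod, mem_closedBall, dist_eq_norm, add_sub_cancel_left]
  rw [hpre] at h
  refine Eq.trans h.symm ?_
  refine integral_congr_ae (Filter.Eventually.of_forall fun p => ?_)
  have : (a + p).1 - (a + p).2 = p.1 - p.2 - t • v := by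
    simp only [ha, Prod.fst_add, Prod.snd_add]; abel
  simp only [this]

end ExpDistAux

/-- for `X` uniform on `B(c, r)` and `Y` uniform on
`B(c + t • v, r')`, the expected distance `E[‖X - Y‖]` is nondecreasing in
`t ≥ 0`.  Since the volumes of the balls do not depend on `t`, this is
equivalent to monotonicity of the unnormalized double integral. -/
theorem expected_dist_monotone_in_shift (d : ℕ)
    (c v : EuclideanSpace ℝ (Fin d)) (hv : ‖v‖ = 1) (r r' : ℝ)
    (hr : 0 ≤ r) (hr' : 0 ≤ r') :
    MonotoneOn (fun t : ℝ =>
      ∫ x in closedBall c r, ∫ y in closedBall (c + t • v) r', ‖x - y‖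
        ∂(volume) ∂(volume)) (Set.Ici (0 : ℝ)) := by
  set S := closedBall (0 : EuclideanSpace ℝ (Fin d)) r ×ˢ
    closedBall (0 : EuclideanSpace ℝ (Fin d)) r' with hS
  have key : ∀ t : ℝ,
      (∫ x in closedBall c r, ∫ y in closedBall (c + t • v) r', ‖x - y‖ ∂volume ∂volume)
        = ∫ p in S, ‖p.1 - p.2 - t • v‖ ∂volume := by
    intro t
    have hi : IntegrableOn
        (fun z : EuclideanSpace ℝ (Fin d) × EuclideanSpace ℝ (Fin d) => ‖z.1 - z.2‖)
        (closedBall c r ×ˢ closedBall (c + t • v) r') (volume.prod volume) := by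
      have := ExpDistAux.integ (0 : EuclideanSpace ℝ (Fin d)) c (c + t • v) r r'
      rw [MeasureTheory.Measure.volume_eq_prod _ _] at this
      simpa using this
    have h1 := setIntegral_prod
      (μ := (volume : Measure (EuclideanSpace ℝ (Fin d))))
      (ν := (volume : Measure (EuclideanSpace ℝ (Fin d))))
      (fun z : EuclideanSpace ℝ (Fin d) × EuclideanSpace ℝ (Fin d) => ‖z.1 - z.2‖) hi
    rw [← h1, ← MeasureTheory.Measure.volume_eq_prod _ _]
    exact ExpDistAux.translate c v r r' t
  intro s hs t ht hst
  have hs0 : (0 : ℝ) ≤ s := hs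
  simp only []
  rw [key s, key t]
  rcases eq_or_lt_of_le hst with rfl | hlt
  · exact le_refl _
  have ht0 : 0 < t := lt_of_le_of_lt hs0 hlt
  set A := (t + s) / (2 * t) with hA
  set B := (t - s) / (2 * t) with hB
  have hAnn : 0 ≤ A := div_nonneg (by linarith) (by linarith)
  have hBnn : 0 ≤ B := div_nonneg (by linarith) (by linarith)
  have hAB : A + B = 1 := by rw [hA, hB]; field_simp; ring
  have hABt : A * t - B * t = s := by rw [hA, hB]; field_simp; ring
  have hpt : ∀ p : EuclideanSpace ℝ (Fin d) × EuclideanSpace ℝ (Fin d),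
      ‖p.1 - p.2 - s • v‖ ≤ A * ‖p.1 - p.2 - t • v‖ + B * ‖p.1 - p.2 + t • v‖ := by
    intro p
    set z := p.1 - p.2 with hz
    have hdecomp : z - s • v = A • (z - t • v) + B • (z + t • v) := by
      have h1 : A • z + B • z = z := by rw [← add_smul, hAB, one_smul]
      have h2 : A • (t • v) - B • (t • v) = s • v := by
        rw [smul_smul, smul_smul, ← sub_smul, hABt]
      calc z - s • v = (A • z + B • z) - (A • (t • v) - B • (t • v)) := by rw [h1, h2]
        _ = A • (z - t • v) + B • (z + t • v) := by module
    rw [hdecomp]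
    calc ‖A • (z - t • v) + B • (z + t • v)‖
        ≤ ‖A • (z - t • v)‖ + ‖B • (z + t • v)‖ := norm_add_le _ _
      _ = A * ‖z - t • v‖ + B * ‖z + t • v‖ := by
          rw [norm_smul, norm_smul, Real.norm_eq_abs, Real.norm_eq_abs,
            abs_of_nonneg hAnn, abs_of_nonneg hBnn]
  have hi1 : IntegrableOn
      (fun p : EuclideanSpace ℝ (Fin d) × EuclideanSpace ℝ (Fin d) => ‖p.1 - p.2 - t • v‖)
      S volume := ExpDistAux.integ (t • v) 0 0 r r'
  have hi2 : IntegrableOn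
      (fun p : EuclideanSpace ℝ (Fin d) × EuclideanSpace ℝ (Fin d) => ‖p.1 - p.2 + t • v‖)
      S volume := by
    have := ExpDistAux.integ (-(t • v)) (0 : EuclideanSpace ℝ (Fin d)) 0 r r'
    simpa [sub_neg_eq_add] using this
  have hmono : (∫ p in S, ‖p.1 - p.2 - s • v‖ ∂volume)
      ≤ ∫ p in S, (A * ‖p.1 - p.2 - t • v‖ + B * ‖p.1 - p.2 + t • v‖) ∂volume := by
    apply integral_mono_of_nonneg
    · filter_upwards with p using norm_nonneg _
    · exact (hi1.const_mul A).add (hi2.const_mul B)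
    · filter_upwards with p using hpt p
  have hsplit : (∫ p in S, (A * ‖p.1 - p.2 - t • v‖ + B * ‖p.1 - p.2 + t • v‖) ∂volume)
      = A * (∫ p in S, ‖p.1 - p.2 - t • v‖ ∂volume)
        + B * (∫ p in S, ‖p.1 - p.2 + t • v‖ ∂volume) := by
    rw [integral_add (hi1.const_mul A) (hi2.const_mul B), integral_const_mul, integral_const_mul]
  have heven := ExpDistAux.even_P v r r' t (d := d)
  calc (∫ p in S, ‖p.1 - p.2 - s • v‖ ∂volume)
      ≤ A * (∫ p in S, ‖p.1 - p.2 - t • v‖ ∂volume)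
        + B * (∫ p in S, ‖p.1 - p.2 + t • v‖ ∂volume) := by rw [← hsplit]; exact hmono
    _ = (A + B) * (∫ p in S, ‖p.1 - p.2 - t • v‖ ∂volume) := by rw [← hS] at heven; rw [heven]; ring
    _ = ∫ p in S, ‖p.1 - p.2 - t • v‖ ∂volume := by rw [hAB, one_mul]
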